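/- Let M_C(x) be the skew-symmetric 4×4 real matrix with entries M₁₂ = x₃²+x₄², M₁₃ = x₂x₃−x₁x₄, M₁₄ = −(x₂x₄+x₁x₃), M₂₃ = x₁x₃+x₂x₄, M₂₄ = x₂x₃−x₁x₄, M₃₄ = x₁²+x₂² (and Mⱼᵢ = −Mᵢⱼ, Mᵢᵢ = 0), for x = (x₁,x₂,x₃,x₄) ∈ ℝ⁴. Then: (a) det M_C(x) = 0 for all x ∈ ℝ⁴ (equivalently its Pfaffian M₁₂M₃₄ − M₁₃M₂₄ + M₁₄M₂₃ vanishes identically); (b) M_C(x) = 0 if and only if x = 0; consequently M_C(x) has rank exactly 2 for every x ≠ 0 and rank 0 at x = 0. -/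

import Mathlib

/-- The coefficient matrix of the quadratic Poisson bivector `π_C` at a
Lefschetz singular point; coordinates x₁,x₂,x₃,x₄ are the indices 0,1,2,3.
Entries: `M₁₂ = x₃²+x₄², M₁₃ = x₂x₃−x₁x₄, M₁₄ = −(x₂x₄+x₁x₃),
M₂₃ = x₁x₃+x₂x₄, M₂₄ = x₂x₃−x₁x₄, M₃₄ = x₁²+x₂²`, skew-symmetric. -/
noncomputable def lefMatrix (x : Fin 4 → ℝ) : Matrix (Fin 4) (Fin 4) ℝ :=
  !![0, (x 2) ^ 2 + (x 3) ^ 2, x 1 * x 2 - x 0 * x 3, -(x 1 * x 3 + x 0 * x 2);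
     -((x 2) ^ 2 + (x 3) ^ 2), 0, x 0 * x 2 + x 1 * x 3, x 1 * x 2 - x 0 * x 3;
     -(x 1 * x 2 - x 0 * x 3), -(x 0 * x 2 + x 1 * x 3), 0, (x 0) ^ 2 + (x 1) ^ 2;
     x 1 * x 3 + x 0 * x 2, -(x 1 * x 2 - x 0 * x 3), -((x 0) ^ 2 + (x 1) ^ 2), 0]

/-!
Writing `M(x) = C(x) D(x)` with `C(x)` of size `4 × 2` shows that the rank of `M(x)` is at most
two, so its determinant vanishes. The entries `M₁₂ = x₃² + x₄²` and `M₃₄ = x₁² + x₂²` vanish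
only together at `x = 0`, and a nonzero skew-symmetric matrix has rank at least two, since a
nonzero entry `Aᵢⱼ` gives the principal `2 × 2` minor `Aᵢⱼ²`.
-/

namespace Matrix

variable {n R : Type*} [Fintype n] [CommRing R] [IsDomain R]

theorem det_eq_zero_of_rank_lt [DecidableEq n] {A : Matrix n n R}
    (h : A.rank < Fintype.card n) : A.det = 0 := by
  by_contra hdet
  exact h.ne (rank_of_det_ne_zero hdet)

theorem two_le_rank_of_transpose_eq_neg [NeZero (2 : R)] {A : Matrix n n R} (hA : Aᵀ = -A)
    (h0 : A ≠ 0) : 2 ≤ A.rank := by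
  have hskew : ∀ i j, A j i = -A i j := fun i j => by
    simpa using congrFun (congrFun hA i) j
  obtain ⟨i, j, hij⟩ : ∃ i j, A i j ≠ 0 := by
    by_contra! h
    exact h0 (Matrix.ext h)
  have hdiag : ∀ k, A k k = 0 := fun k => by
    have h2 : (2 : R) * A k k = 0 := by linear_combination hskew k k
    simpa [NeZero.ne (2 : R)] using h2
  have hminor : (A.submatrix ![i, j] ![i, j]).det = A i j ^ 2 := by
    rw [det_fin_two]
    simp [hdiag, hskew i j]
    ring
  calc 2 = (A.submatrix ![i, j] ![i, j]).rank := by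
        rw [rank_of_det_ne_zero (by rw [hminor]; exact pow_ne_zero 2 hij), Fintype.card_fin]
    _ ≤ A.rank := rank_submatrix_le _ _ _

end Matrix

open Matrix

noncomputable def lefLeftFactor (x : Fin 4 → ℝ) : Matrix (Fin 4) (Fin 2) ℝ :=
  !![x 2, -(x 3); x 3, x 2; -(x 0), x 1; -(x 1), -(x 0)]

noncomputable def lefRightFactor (x : Fin 4 → ℝ) : Matrix (Fin 2) (Fin 4) ℝ :=
  !![-(x 3), x 2, x 1, -(x 0); -(x 2), -(x 3), x 0, x 1]

theorem lefMatrix_eq_mul (x : Fin 4 → ℝ) : lefMatrix x = lefLeftFactor x * lefRightFactor x := by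
  ext i j
  fin_cases i <;> fin_cases j <;>
    simp [lefMatrix, lefLeftFactor, lefRightFactor, mul_apply, Fin.sum_univ_two] <;> ring

theorem lefMatrix_rank_le (x : Fin 4 → ℝ) : (lefMatrix x).rank ≤ 2 := by
  rw [lefMatrix_eq_mul]
  exact (rank_mul_le_left _ _).trans (rank_le_width _)

theorem lefMatrix_det (x : Fin 4 → ℝ) : (lefMatrix x).det = 0 :=
  det_eq_zero_of_rank_lt ((lefMatrix_rank_le x).trans_lt (by simp))

theorem lefMatrix_pfaffian (x : Fin 4 → ℝ) :
    lefMatrix x 0 1 * lefMatrix x 2 3 - lefMatrix x 0 2 * lefMatrix x 1 3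
      + lefMatrix x 0 3 * lefMatrix x 1 2 = 0 := by
  simp [lefMatrix]
  ring

theorem lefMatrix_transpose (x : Fin 4 → ℝ) : (lefMatrix x)ᵀ = -lefMatrix x := by
  ext i j
  fin_cases i <;> fin_cases j <;> simp [lefMatrix]

theorem lefMatrix_eq_zero_iff (x : Fin 4 → ℝ) : lefMatrix x = 0 ↔ x = 0 := by
  constructor
  · intro h
    have h01 : x 2 ^ 2 + x 3 ^ 2 = 0 := by simpa [lefMatrix] using congrFun (congrFun h 0) 1
    have h23 : x 0 ^ 2 + x 1 ^ 2 = 0 := by simpa [lefMatrix] using congrFun (congrFun h 2) 3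
    obtain ⟨h0, h1⟩ := (add_eq_zero_iff_of_nonneg (sq_nonneg _) (sq_nonneg _)).mp h23
    obtain ⟨h2, h3⟩ := (add_eq_zero_iff_of_nonneg (sq_nonneg _) (sq_nonneg _)).mp h01
    rw [sq_eq_zero_iff] at h0 h1 h2 h3
    funext i
    fin_cases i <;> assumption
  · rintro rfl
    ext i j
    fin_cases i <;> fin_cases j <;> simp [lefMatrix]

/-- (a) the determinant (equivalently the Pfaffian) of `lefMatrix` vanishes
identically; (b) `lefMatrix x = 0` iff `x = 0`, and consequently the rank is
exactly 2 away from the origin and 0 at the origin. -/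
theorem lefMatrix_det_rank :
    (∀ x : Fin 4 → ℝ, (lefMatrix x).det = 0) ∧
    (∀ x : Fin 4 → ℝ,
      lefMatrix x 0 1 * lefMatrix x 2 3 - lefMatrix x 0 2 * lefMatrix x 1 3
        + lefMatrix x 0 3 * lefMatrix x 1 2 = 0) ∧
    (∀ x : Fin 4 → ℝ, lefMatrix x = 0 ↔ x = 0) ∧
    (∀ x : Fin 4 → ℝ, x ≠ 0 → (lefMatrix x).rank = 2) ∧
    (lefMatrix 0).rank = 0 := by
  refine ⟨lefMatrix_det, lefMatrix_pfaffian, lefMatrix_eq_zero_iff, fun x hx => ?_, ?_⟩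
  · have hM : lefMatrix x ≠ 0 := (lefMatrix_eq_zero_iff x).not.mpr hx
    exact (lefMatrix_rank_le x).antisymm
      (two_le_rank_of_transpose_eq_neg (lefMatrix_transpose x) hM)
  · rw [(lefMatrix_eq_zero_iff 0).mpr rfl, rank_zero]
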